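/- arXiv:1703.02683 — 5 statements merged into one kernel-verified Lean document; each statement's English description precedes it below -/
import Mathlib

section
/- Let C ⊆ ℝ^m be a convex cone, let x ∈ ℝ^m and y ∈ C with x ≠ y, let t > 1, and set b := x + t•(y − x). Assume b ∈ C and x + t'•(y − x) ∉ C for every t' > t (so b is the point where the line through x and y exits C beyond y). Then M(x,y) = t/(t−1) = ‖x − b‖ / ‖y − b‖. -/
/-- Birkhoff coefficient `M(x,y) = inf {λ ≥ 0 : λ•y - x ∈ C}`. -/
noncomputable def Mcoef {m : ℕ} (C : Set (EuclideanSpace ℝ (Fin m)))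
    (x y : EuclideanSpace ℝ (Fin m)) : ℝ :=
  sInf {l : ℝ | 0 ≤ l ∧ l • y - x ∈ C}

/-- Birkhoff coefficient `m(x,y) = sup {λ ≥ 0 : x - λ•y ∈ C}`. -/
noncomputable def mcoef {m : ℕ} (C : Set (EuclideanSpace ℝ (Fin m)))
    (x y : EuclideanSpace ℝ (Fin m)) : ℝ :=
  sSup {l : ℝ | 0 ≤ l ∧ x - l • y ∈ C}

/-- Birkhoff's version of the Hilbert metric `d_h(x,y) = (1/2)·log(M(x,y)/m(x,y))`. -/
noncomputable def dh {m : ℕ} (C : Set (EuclideanSpace ℝ (Fin m)))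
    (x y : EuclideanSpace ℝ (Fin m)) : ℝ :=
  (1 / 2) * Real.log (Mcoef C x y / mcoef C x y)

/-!
Write `p τ = x + τ • (y - x)` and let `p t` be the last point of the line in the cone `K`.
For `l > 1` the vector `l • y - x` is the positive multiple `(l - 1) • p (l / (l - 1))`, so
`l • y - x ∈ K` forces `l / (l - 1) ≤ t`, i.e. `l ≥ t / (t - 1)`, with equality at `l = t / (t - 1)`.
For arbitrary `l` the same conclusion follows by looking at `a • p t + (l • y - x)` for a large
weight `a > 0`: it is a positive multiple of a point `p t'` with `t' > t` unless `t ≤ l * (t - 1)`.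
-/

namespace ConvexCone

variable {E : Type*} [AddCommGroup E] [Module ℝ E] (K : ConvexCone ℝ E) {x y : E} {t : ℝ}

theorem le_mul_sub_one_of_smul_sub_mem (hb : x + t • (y - x) ∈ K)
    (hout : ∀ t' : ℝ, t < t' → x + t' • (y - x) ∉ K) {l : ℝ} (hl : l • y - x ∈ K) :
    t ≤ l * (t - 1) := by
  by_contra! hlt
  obtain ⟨a, ha, hal⟩ : ∃ a : ℝ, 0 < a ∧ 1 - l < a :=
    ⟨|1 - l| + 1, by positivity, by linarith [le_abs_self (1 - l)]⟩
  have hc : 0 < a + l - 1 := by linarith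
  have hsum : a • (x + t • (y - x)) + (l • y - x) ∈ K := K.add_mem (K.smul_mem ha hb) hl
  have hline : (a + l - 1)⁻¹ • (a • (x + t • (y - x)) + (l • y - x)) =
      x + ((a * t + l) / (a + l - 1)) • (y - x) := by
    match_scalars <;> field_simp
    ring
  refine hout _ ?_ (hline ▸ K.smul_mem (inv_pos.mpr hc) hsum)
  rw [lt_div_iff₀ hc]
  nlinarith

theorem div_sub_one_smul_sub_mem (ht : 1 < t) (hb : x + t • (y - x) ∈ K) :
    (t / (t - 1)) • y - x ∈ K := by
  have ht1 : 0 < t - 1 := by linarith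
  have h : (t / (t - 1)) • y - x = (t - 1)⁻¹ • (x + t • (y - x)) := by
    match_scalars <;> field_simp
    ring
  exact h ▸ K.smul_mem (inv_pos.mpr ht1) hb

theorem isLeast_smul_sub_mem (ht : 1 < t) (hb : x + t • (y - x) ∈ K)
    (hout : ∀ t' : ℝ, t < t' → x + t' • (y - x) ∉ K) :
    IsLeast {l : ℝ | 0 ≤ l ∧ l • y - x ∈ K} (t / (t - 1)) := by
  have ht1 : 0 < t - 1 := by linarith
  refine ⟨⟨by positivity, K.div_sub_one_smul_sub_mem ht hb⟩, fun l ⟨_, hl⟩ => ?_⟩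
  rw [div_le_iff₀ ht1]
  exact K.le_mul_sub_one_of_smul_sub_mem hb hout hl

end ConvexCone

theorem norm_sub_div_norm_sub_of_mem_line {E : Type*} [NormedAddCommGroup E] [NormedSpace ℝ E]
    {x y : E} (hxy : x ≠ y) (t : ℝ) :
    ‖x - (x + t • (y - x))‖ / ‖y - (x + t • (y - x))‖ = |t| / |t - 1| := by
  have hx : x - (x + t • (y - x)) = (-t) • (y - x) := by module
  have hy : y - (x + t • (y - x)) = (1 - t) • (y - x) := by module
  have hyx : ‖y - x‖ ≠ 0 := norm_ne_zero_iff.mpr (sub_ne_zero.mpr hxy.symm)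
  rw [hx, hy, norm_smul, norm_smul, mul_div_mul_right _ _ hyx, Real.norm_eq_abs,
    Real.norm_eq_abs, abs_neg, abs_sub_comm]

theorem stmt2_general {m : ℕ} (C : Set (EuclideanSpace ℝ (Fin m)))
    (hadd : ∀ a ∈ C, ∀ b ∈ C, a + b ∈ C)
    (hsmul : ∀ c : ℝ, 0 < c → ∀ a ∈ C, c • a ∈ C)
    (x y : EuclideanSpace ℝ (Fin m)) (hxy : x ≠ y)
    (t : ℝ) (ht : 1 < t)
    (b : EuclideanSpace ℝ (Fin m)) (hbdef : b = x + t • (y - x))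
    (hb : b ∈ C)
    (hout : ∀ t' : ℝ, t < t' → x + t' • (y - x) ∉ C) :
    Mcoef C x y = t / (t - 1) ∧ t / (t - 1) = ‖x - b‖ / ‖y - b‖ := by
  subst hbdef
  let K : ConvexCone ℝ (EuclideanSpace ℝ (Fin m)) :=
    ⟨C, fun c hc a ha => hsmul c hc a ha, fun a ha b hb => hadd a ha b hb⟩
  refine ⟨(K.isLeast_smul_sub_mem ht hb hout).csInf_eq, ?_⟩
  rw [norm_sub_div_norm_sub_of_mem_line hxy, abs_of_pos (by linarith),
    abs_of_pos (by linarith)]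

/-- If `b = x + t•(y − x)` (with `t > 1`) is the point where the line through `x` and
`y` exits the convex cone `C` beyond `y`, then `M(x,y) = t/(t−1) = ‖x − b‖/‖y − b‖`. -/
theorem stmt2 {m : ℕ} (C : Set (EuclideanSpace ℝ (Fin m)))
    (hadd : ∀ a ∈ C, ∀ b ∈ C, a + b ∈ C)
    (hsmul : ∀ c : ℝ, 0 < c → ∀ a ∈ C, c • a ∈ C)
    (x y : EuclideanSpace ℝ (Fin m)) (hy : y ∈ C) (hxy : x ≠ y)
    (t : ℝ) (ht : 1 < t)
    (b : EuclideanSpace ℝ (Fin m)) (hbdef : b = x + t • (y - x))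
    (hb : b ∈ C)
    (hout : ∀ t' : ℝ, t < t' → x + t' • (y - x) ∉ C) :
    Mcoef C x y = t / (t - 1) ∧ t / (t - 1) = ‖x - b‖ / ‖y - b‖ :=
  stmt2_general C hadd hsmul x y hxy t ht b hbdef hb hout
end

section
/- Let C ⊆ ℝ^m be a convex cone, let x ∈ C and y ∈ ℝ^m with x ≠ y, let s < 0, and set a := x + s•(y − x). Assume a ∈ C and x + s'•(y − x) ∉ C for every s' < s (so a is the point where the line through x and y exits C beyond x). Then m(x,y) = (−s)/(1−s) = ‖x − a‖ / ‖y − a‖. -/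
/-!
For `l < 1` the point `x - l • y` is a positive multiple of the point `x + r • (y - x)` of the
line through `x` and `y`, where `(1 - l) * (1 - r) = 1`; this correspondence `l ↦ r` is
decreasing and sends `-s / (1 - s)` to `s`. Since `C` is convex and contains `x`, the admissible
`l` (those with `x - l • y ∈ C`) form an initial segment of `[0, ∞)`, so an admissible `l`
beyond `-s / (1 - s)` would give an admissible `l' < 1` beyond it, hence a point of the line in
`C` before the exit parameter `s`.
-/

section Cone

variable {E : Type*} [AddCommGroup E] [Module ℝ E] {C : Set E} {x y : E} {l r : ℝ}

theorem one_sub_smul_add_smul_sub_eq (h : (1 - l) * (1 - r) = 1) :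
    (1 - l) • (x + r • (y - x)) = x - l • y := by
  match_scalars
  · linear_combination h
  · linear_combination -h

theorem add_smul_sub_mem_iff_sub_smul_mem (hsmul : ∀ c : ℝ, 0 < c → ∀ a ∈ C, c • a ∈ C)
    (h : (1 - l) * (1 - r) = 1) (hl : l < 1) :
    x + r • (y - x) ∈ C ↔ x - l • y ∈ C := by
  have hr : 0 < 1 - r := pos_of_mul_pos_right (h.symm ▸ one_pos) (sub_pos.2 hl).le
  constructor
  · intro hC
    rw [← one_sub_smul_add_smul_sub_eq h]
    exact hsmul _ (sub_pos.2 hl) _ hC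
  intro hC
  have hinv : (1 - r) • (x - l • y) = x + r • (y - x) := by
    rw [← one_sub_smul_add_smul_sub_eq h, smul_smul, mul_comm, h, one_smul]
  exact hinv ▸ hsmul _ hr _ hC

theorem sub_smul_mem_of_lt (hadd : ∀ a ∈ C, ∀ b ∈ C, a + b ∈ C)
    (hsmul : ∀ c : ℝ, 0 < c → ∀ a ∈ C, c • a ∈ C) (hx : x ∈ C) (hl : x - l • y ∈ C)
    (hr₀ : 0 < r) (hrl : r < l) : x - r • y ∈ C := by
  have hl₀ : 0 < l := hr₀.trans hrl
  have hconv : x - r • y = (1 - r / l) • x + (r / l) • (x - l • y) := by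
    match_scalars <;> field_simp; ring
  rw [hconv]
  exact hadd _ (hsmul _ (by rw [sub_pos, div_lt_one hl₀]; exact hrl) _ hx) _
    (hsmul _ (div_pos hr₀ hl₀) _ hl)

theorem isGreatest_sub_smul_mem_of_exit (hadd : ∀ a ∈ C, ∀ b ∈ C, a + b ∈ C)
    (hsmul : ∀ c : ℝ, 0 < c → ∀ a ∈ C, c • a ∈ C) (hx : x ∈ C) {s : ℝ} (hs : s ≤ 0)
    (ha : x + s • (y - x) ∈ C) (hout : ∀ s' : ℝ, s' < s → x + s' • (y - x) ∉ C) :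
    IsGreatest {l : ℝ | 0 ≤ l ∧ x - l • y ∈ C} (-s / (1 - s)) := by
  have h1s : 0 < 1 - s := by linarith
  set t := -s / (1 - s) with ht
  have ht0 : 0 ≤ t := div_nonneg (neg_nonneg.2 hs) h1s.le
  have ht1 : t < 1 := by rw [ht, div_lt_one h1s]; linarith
  have hts : (1 - t) * (1 - s) = 1 := by rw [ht]; field_simp; ring
  refine ⟨⟨ht0, (add_smul_sub_mem_iff_sub_smul_mem hsmul hts ht1).1 ha⟩, ?_⟩
  rintro l ⟨-, hl⟩
  by_contra! htl
  obtain ⟨l', htl', hl'⟩ := exists_between (lt_min htl ht1)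
  have hl'1 : 0 < 1 - l' := sub_pos.2 (hl'.trans_le (min_le_right _ _))
  have hrel : (1 - l') * (1 - (1 - (1 - l')⁻¹)) = 1 := by field_simp; ring
  refine hout (1 - (1 - l')⁻¹) ?_ ((add_smul_sub_mem_iff_sub_smul_mem hsmul hrel
    (sub_pos.1 hl'1)).2 (sub_smul_mem_of_lt hadd hsmul hx hl
      (ht0.trans_lt htl') (hl'.trans_le (min_le_left _ _))))
  -- the exit parameter `1 - (1 - ·)⁻¹` is decreasing in `l`, and it maps `t` back to `s`
  have : (1 - t)⁻¹ < (1 - l')⁻¹ := inv_strictAnti₀ hl'1 (by linarith)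
  rw [← eq_inv_of_mul_eq_one_right hts] at this
  linarith

end Cone

theorem norm_sub_div_norm_sub_add_smul {F : Type*} [NormedAddCommGroup F] [NormedSpace ℝ F]
    {x y : F} (hxy : x ≠ y) {s : ℝ} (hs : s ≤ 0) :
    ‖x - (x + s • (y - x))‖ / ‖y - (x + s • (y - x))‖ = -s / (1 - s) := by
  have hxa : x - (x + s • (y - x)) = (-s) • (y - x) := by module
  have hya : y - (x + s • (y - x)) = (1 - s) • (y - x) := by module
  rw [hxa, hya, norm_smul, norm_smul, Real.norm_eq_abs, Real.norm_eq_abs,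
    abs_of_nonneg (neg_nonneg.2 hs), abs_of_nonneg (by linarith),
    mul_div_mul_right _ _ (norm_ne_zero_iff.2 (sub_ne_zero.2 hxy.symm))]

/-- If `a = x + s•(y − x)` (with `s < 0`) is the point where the line through `x` and
`y` exits the convex cone `C` beyond `x`, then `m(x,y) = (−s)/(1−s) = ‖x − a‖/‖y − a‖`. -/
theorem stmt3 {m : ℕ} (C : Set (EuclideanSpace ℝ (Fin m)))
    (hadd : ∀ a ∈ C, ∀ b ∈ C, a + b ∈ C)
    (hsmul : ∀ c : ℝ, 0 < c → ∀ a ∈ C, c • a ∈ C)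
    (x y : EuclideanSpace ℝ (Fin m)) (hx : x ∈ C) (hxy : x ≠ y)
    (s : ℝ) (hs : s < 0)
    (a : EuclideanSpace ℝ (Fin m)) (hadef : a = x + s • (y - x))
    (ha : a ∈ C)
    (hout : ∀ s' : ℝ, s' < s → x + s' • (y - x) ∉ C) :
    mcoef C x y = (-s) / (1 - s) ∧ (-s) / (1 - s) = ‖x - a‖ / ‖y - a‖ := by
  subst hadef
  exact ⟨(isGreatest_sub_smul_mem_of_exit hadd hsmul hx hs.le ha hout).csSup_eq,
    (norm_sub_div_norm_sub_add_smul hxy hs.le).symm⟩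
end

section
/- Let C ⊆ ℝ^m be a convex cone, let x, y ∈ C with x ≠ y, let s < 0 and t > 1, and set a := x + s•(y − x), b := x + t•(y − x). Assume a ∈ C, b ∈ C, and x + r•(y − x) ∉ C whenever r < s or r > t. Then M(x,y)/m(x,y) = (‖a − y‖ · ‖b − x‖) / (‖a − x‖ · ‖b − y‖); equivalently, d_h(x,y) = (1/2)·log of the cross-ratio [a, b, y, x] of the four collinear points a, x, y, b, so Birkhoff's version of the Hilbert metric agrees with Hilbert's original cross-ratio definition. -/
/-- Birkhoff'"'"'s version of the Hilbert metric agrees with Hilbert'"'"'s original cross-ratio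
definition: if `a = x + s•(y−x)`, `b = x + t•(y−x)` (with `s < 0 < 1 < t`) are the two
points where the line through `x, y` exits the cone, then
`M(x,y)/m(x,y) = (‖a−y‖·‖b−x‖)/(‖a−x‖·‖b−y‖)` and `d_h(x,y)` is half the log of this
cross-ratio. -/
theorem stmt4 {m : ℕ} (C : Set (EuclideanSpace ℝ (Fin m)))
    (hadd : ∀ a ∈ C, ∀ b ∈ C, a + b ∈ C)
    (hsmul : ∀ c : ℝ, 0 < c → ∀ a ∈ C, c • a ∈ C)
    (x y : EuclideanSpace ℝ (Fin m)) (hx : x ∈ C) (hy : y ∈ C) (hxy : x ≠ y)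
    (s t : ℝ) (hs : s < 0) (ht : 1 < t)
    (a b : EuclideanSpace ℝ (Fin m))
    (hadef : a = x + s • (y - x)) (hbdef : b = x + t • (y - x))
    (ha : a ∈ C) (hb : b ∈ C)
    (hout : ∀ r : ℝ, r < s ∨ t < r → x + r • (y - x) ∉ C) :
    Mcoef C x y / mcoef C x y = (‖a - y‖ * ‖b - x‖) / (‖a - x‖ * ‖b - y‖) ∧
    dh C x y = (1 / 2) * Real.log ((‖a - y‖ * ‖b - x‖) / (‖a - x‖ * ‖b - y‖)) := by
  have hv : y - x ≠ 0 := sub_ne_zero.mpr (Ne.symm hxy)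
  have hvn : ‖y - x‖ ≠ 0 := norm_ne_zero_iff.mpr hv
  have hts : (0:ℝ) < t - s := by linarith
  -- membership characterization on the line
  have hmem : ∀ r : ℝ, (x + r • (y - x) ∈ C ↔ s ≤ r ∧ r ≤ t) := by
    intro r
    constructor
    · intro h
      constructor
      · by_contra h'; push_neg at h'; exact hout r (Or.inl h') h
      · by_contra h'; push_neg at h'; exact hout r (Or.inr h') h
    · rintro ⟨h1, h2⟩
      rcases eq_or_lt_of_le h1 with h1' | h1'
      · rw [← h1', ← hadef]; exact ha
      rcases eq_or_lt_of_le h2 with h2' | h2'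
      · rw [h2', ← hbdef]; exact hb
      have hc1 : (0:ℝ) < (t - r) / (t - s) := div_pos (by linarith) hts
      have hc2 : (0:ℝ) < (r - s) / (t - s) := div_pos (by linarith) hts
      have := hadd _ (hsmul _ hc1 a ha) _ (hsmul _ hc2 b hb)
      have heq : x + r • (y - x) = ((t - r)/(t - s)) • a + ((r - s)/(t - s)) • b := by
        rw [hadef, hbdef]
        match_scalars <;> field_simp <;> ring
      rw [heq]; exact this
  -- y - x is not in the cone
  have hvC : (y - x) ∉ C := by
    intro h
    apply hout (t + 1) (Or.inr (by linarith))
    have := hadd b hb _ h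
    have heq : x + (t + 1) • (y - x) = b + (y - x) := by rw [hbdef]; module
    rw [heq]; exact this
  -- -(y - x) is not in the cone
  have hnvC : -(y - x) ∉ C := by
    intro h
    apply hout (s - 1) (Or.inl (by linarith))
    have := hadd a ha _ h
    have heq : x + (s - 1) • (y - x) = a + -(y - x) := by rw [hadef]; module
    rw [heq]; exact this
  have ht1 : (0:ℝ) < t - 1 := by linarith
  have hs1 : (0:ℝ) < 1 - s := by linarith
  -- compute Mcoef
  have hMmem : t / (t - 1) ∈ {l : ℝ | 0 ≤ l ∧ l • y - x ∈ C} := by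
    refine ⟨le_of_lt (div_pos (by linarith) ht1), ?_⟩
    have := hsmul (t - 1)⁻¹ (by positivity) b hb
    have heq : (t / (t - 1)) • y - x = (t - 1)⁻¹ • b := by
      rw [hbdef]; match_scalars <;> field_simp <;> ring
    rw [heq]; exact this
  have hMlb : ∀ l ∈ {l : ℝ | 0 ≤ l ∧ l • y - x ∈ C}, t / (t - 1) ≤ l := by
    rintro l ⟨hl0, hlC⟩
    rcases lt_or_ge 1 l with h1 | h1
    · have hl1 : (0:ℝ) < l - 1 := by linarith
      have hc : x + (l / (l - 1)) • (y - x) ∈ C := by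
        have := hsmul (l - 1)⁻¹ (by positivity) _ hlC
        have heq : x + (l / (l - 1)) • (y - x) = (l - 1)⁻¹ • (l • y - x) := by
          match_scalars <;> field_simp <;> ring
        rw [heq]; exact this
      obtain ⟨_, h2⟩ := (hmem _).mp hc
      rw [div_le_iff₀ hl1] at h2
      rw [div_le_iff₀ ht1]
      nlinarith
    · exfalso
      rcases eq_or_lt_of_le hl0 with h0 | h0
      · have hx' : -x ∈ C := by
          have : (0:ℝ) • y - x ∈ C := by rw [h0]; exact hlC
          simpa using this
        have htv : t • (y - x) ∈ C := by
          have := hadd _ hx' b hb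
          have heq : t • (y - x) = -x + b := by rw [hbdef]; module
          rw [heq]; exact this
        apply hvC
        have := hsmul t⁻¹ (by positivity) _ htv
        rw [smul_smul, inv_mul_cancel₀ (by positivity : t ≠ 0), one_smul] at this
        exact this
      · have hsum := hadd _ hlC b hb
        have hc : x + ((l + t) / l) • (y - x) ∈ C := by
          have := hsmul l⁻¹ (by positivity) _ hsum
          have heq : x + ((l + t) / l) • (y - x) = l⁻¹ • ((l • y - x) + b) := by
            rw [hbdef]; match_scalars <;> field_simp <;> ring
          rw [heq]; exact this
        apply hout ((l + t) / l) (Or.inr ?_) hc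
        rw [lt_div_iff₀ h0]; nlinarith
  have hM : Mcoef C x y = t / (t - 1) := by
    unfold Mcoef
    exact le_antisymm (csInf_le ⟨t / (t - 1), hMlb⟩ hMmem) (le_csInf ⟨_, hMmem⟩ hMlb)
  -- compute mcoef
  have hmmem : -s / (1 - s) ∈ {l : ℝ | 0 ≤ l ∧ x - l • y ∈ C} := by
    refine ⟨le_of_lt (div_pos (by linarith) hs1), ?_⟩
    have := hsmul (1 - s)⁻¹ (by positivity) a ha
    have heq : x - (-s / (1 - s)) • y = (1 - s)⁻¹ • a := by
      rw [hadef]; match_scalars <;> field_simp <;> ring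
    rw [heq]; exact this
  have hmub : ∀ l ∈ {l : ℝ | 0 ≤ l ∧ x - l • y ∈ C}, l ≤ -s / (1 - s) := by
    rintro l ⟨hl0, hlC⟩
    rcases lt_or_ge l 1 with h1 | h1
    · have hl1 : (0:ℝ) < 1 - l := by linarith
      have hc : x + (-l / (1 - l)) • (y - x) ∈ C := by
        have := hsmul (1 - l)⁻¹ (inv_pos.mpr hl1) _ hlC
        have heq : x + (-l / (1 - l)) • (y - x) = (1 - l)⁻¹ • (x - l • y) := by
          match_scalars <;> field_simp <;> ring
        rw [heq]; exact this
      obtain ⟨h2, _⟩ := (hmem _).mp hc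
      rw [le_div_iff₀ hl1] at h2
      rw [le_div_iff₀ hs1]
      nlinarith
    · exfalso
      rcases eq_or_lt_of_le h1 with h1' | h1'
      · apply hnvC
        have : x - (1:ℝ) • y ∈ C := by rw [h1']; exact hlC
        simpa [neg_sub] using this
      · have hl1 : (0:ℝ) < l - 1 := by linarith
        have hsum := hadd _ hlC _ (hsmul (l - 1) hl1 a ha)
        have hcv : ((l - 1) * s - l) • (y - x) ∈ C := by
          have heq : ((l - 1) * s - l) • (y - x) = (x - l • y) + (l - 1) • a := by
            rw [hadef]; module
          rw [heq]; exact hsum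
        have hneg : (l - 1) * s - l < 0 := by nlinarith
        apply hnvC
        have := hsmul (-((l - 1) * s - l))⁻¹ (by linarith [inv_pos.mpr (neg_pos.mpr hneg)]) _ hcv
        rw [smul_smul] at this
        have hcoe : (-((l - 1) * s - l))⁻¹ * ((l - 1) * s - l) = -1 := by
          have hne : (l - 1) * s - l ≠ 0 := ne_of_lt hneg
          rw [inv_neg, neg_mul, inv_mul_cancel₀ hne]
        rw [hcoe, neg_one_smul] at this
        exact this
  have hm0 : mcoef C x y = -s / (1 - s) := by
    unfold mcoef
    have h0mem : (0:ℝ) ∈ {l : ℝ | 0 ≤ l ∧ x - l • y ∈ C} := ⟨le_refl 0, by simpa using hx⟩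
    exact le_antisymm (csSup_le ⟨0, h0mem⟩ hmub) (le_csSup ⟨-s / (1 - s), hmub⟩ hmmem)
  -- norms
  have hay : ‖a - y‖ = (1 - s) * ‖y - x‖ := by
    have heq : a - y = (s - 1) • (y - x) := by rw [hadef]; module
    rw [heq, norm_smul, Real.norm_eq_abs, abs_of_neg (by linarith : s - 1 < 0)]; ring
  have hbx : ‖b - x‖ = t * ‖y - x‖ := by
    have heq : b - x = t • (y - x) := by rw [hbdef]; module
    rw [heq, norm_smul, Real.norm_eq_abs, abs_of_pos (by linarith : (0:ℝ) < t)]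
  have hax : ‖a - x‖ = -s * ‖y - x‖ := by
    have heq : a - x = s • (y - x) := by rw [hadef]; module
    rw [heq, norm_smul, Real.norm_eq_abs, abs_of_neg hs]
  have hby : ‖b - y‖ = (t - 1) * ‖y - x‖ := by
    have heq : b - y = (t - 1) • (y - x) := by rw [hbdef]; module
    rw [heq, norm_smul, Real.norm_eq_abs, abs_of_pos ht1]
  have hmain : Mcoef C x y / mcoef C x y = (‖a - y‖ * ‖b - x‖) / (‖a - x‖ * ‖b - y‖) := by
    rw [hM, hm0, hay, hbx, hax, hby]
    have hsne : s ≠ 0 := ne_of_lt hs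
    field_simp
  exact ⟨hmain, by rw [dh, hmain]⟩
end

section
/- Let C ⊆ ℝ^m be a closed convex cone with C ≠ ℝ^m, let x ∈ C, and let y belong to the topological interior of C. Then ⟨f, y⟩ > 0 for every nonzero f ∈ C*, and inf{λ ≥ 0 : λ•y − x ∈ C} = sup{⟨f, x⟩/⟨f, y⟩ : f ∈ C*, f ≠ 0}; both sides are finite and nonnegative. (Dual characterization of the Birkhoff coefficient M(x,y) via supporting hyperplanes of the cone.) -/
/- The cone `C` is its own bidual (Farkas), so `λ•y − x ∈ C` holds exactly when every nonzero
`f ∈ C*` gives `⟨f, x⟩ ≤ λ ⟨f, y⟩`. Since `y` is interior, `⟨f, y⟩ > 0` for such `f`, so this says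
that `λ` is an upper bound of the ratios `⟨f, x⟩ / ⟨f, y⟩`; hence `M(x, y)`, the least such `λ`,
is their supremum. -/

open scoped RealInnerProductSpace

/-- The dual cone `C* = {f : ⟨f,z⟩ ≥ 0 for all z ∈ C}`. -/
def dualCone {m : ℕ} (C : Set (EuclideanSpace ℝ (Fin m))) :
    Set (EuclideanSpace ℝ (Fin m)) :=
  {f | ∀ z ∈ C, 0 ≤ ⟪f, z⟫}

open Set Filter Topology

lemma exists_properCone_coe_eq {E : Type*} [AddCommGroup E] [TopologicalSpace E] [Module ℝ E]
    [ContinuousSMul ℝ E] {C : Set E} (hadd : ∀ a ∈ C, ∀ b ∈ C, a + b ∈ C)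
    (hsmul : ∀ c : ℝ, 0 < c → ∀ a ∈ C, c • a ∈ C) (hclosed : IsClosed C) (hne : C.Nonempty) :
    ∃ P : ProperCone ℝ E, (P : Set E) = C := by
  let K : ConvexCone ℝ E := ⟨C, fun c hc a ha => hsmul c hc a ha, fun a ha b hb => hadd a ha b hb⟩
  lift K to ProperCone ℝ E using ⟨hne, hclosed⟩ with P hP
  exact ⟨P, congrArg SetLike.coe hP⟩

lemma exists_pos_sub_smul_mem_of_mem_interior {E : Type*} [AddCommGroup E] [TopologicalSpace E]
    [Module ℝ E] [IsTopologicalAddGroup E] [ContinuousSMul ℝ E] {C : Set E} {y : E}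
    (hy : y ∈ interior C) (v : E) : ∃ t : ℝ, 0 < t ∧ y - t • v ∈ C := by
  have hlim : Tendsto (fun t : ℝ => y - t • v) (𝓝[>] 0) (𝓝 y) := by
    have hcont : Continuous fun t : ℝ => y - t • v := by fun_prop
    simpa using (hcont.tendsto 0).mono_left nhdsWithin_le_nhds
  obtain ⟨t, hmem, ht⟩ :=
    ((hlim.eventually (mem_interior_iff_mem_nhds.1 hy)).and self_mem_nhdsWithin).exists
  exact ⟨t, ht, hmem⟩

lemma exists_smul_sub_mem_of_mem_interior {E : Type*} [AddCommGroup E] [TopologicalSpace E]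
    [Module ℝ E] [IsTopologicalAddGroup E] [ContinuousSMul ℝ E] {C : Set E}
    (hsmul : ∀ c : ℝ, 0 < c → ∀ a ∈ C, c • a ∈ C) {y : E} (hy : y ∈ interior C) (x : E) :
    ∃ l : ℝ, 0 ≤ l ∧ l • y - x ∈ C := by
  obtain ⟨t, ht, hmem⟩ := exists_pos_sub_smul_mem_of_mem_interior hy x
  refine ⟨t⁻¹, (inv_pos.2 ht).le, ?_⟩
  simpa [smul_sub, smul_smul, ht.ne'] using hsmul t⁻¹ (inv_pos.2 ht) _ hmem

lemma inner_smul_sub_nonneg_iff {E : Type*} [NormedAddCommGroup E] [InnerProductSpace ℝ E]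
    {f x y : E} (hfy : 0 < ⟪f, y⟫) (l : ℝ) : 0 ≤ ⟪f, l • y - x⟫ ↔ ⟪f, x⟫ / ⟪f, y⟫ ≤ l := by
  rw [inner_sub_right, real_inner_smul_right, div_le_iff₀ hfy, sub_nonneg]

section DualCone

variable {m : ℕ}

def supportRatios (C : Set (EuclideanSpace ℝ (Fin m))) (x y : EuclideanSpace ℝ (Fin m)) :
    Set ℝ :=
  {r | ∃ f ∈ dualCone C, f ≠ 0 ∧ r = ⟪f, x⟫ / ⟪f, y⟫}

lemma mem_iff_forall_mem_dualCone (P : ProperCone ℝ (EuclideanSpace ℝ (Fin m)))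
    (z : EuclideanSpace ℝ (Fin m)) : z ∈ P ↔ ∀ f ∈ dualCone (P : Set _), 0 ≤ ⟪f, z⟫ := by
  refine ⟨fun hz f hf => hf z hz, fun h => by_contra fun hz => ?_⟩
  obtain ⟨g, hg, hgz⟩ := P.hyperplane_separation' hz
  have hgz' := h g fun w hw => real_inner_comm w g ▸ hg w hw
  rw [real_inner_comm] at hgz'
  exact hgz'.not_gt hgz

lemma exists_mem_dualCone_ne_zero (P : ProperCone ℝ (EuclideanSpace ℝ (Fin m)))
    (hne : (P : Set (EuclideanSpace ℝ (Fin m))) ≠ univ) :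
    ∃ f ∈ dualCone (P : Set (EuclideanSpace ℝ (Fin m))), f ≠ 0 := by
  obtain ⟨z, hz⟩ := (ne_univ_iff_exists_notMem _).1 hne
  obtain ⟨f, hf, hfz⟩ := not_forall₂.1 (mt (mem_iff_forall_mem_dualCone P z).2 hz)
  exact ⟨f, hf, by rintro rfl; simp at hfz⟩

variable {C : Set (EuclideanSpace ℝ (Fin m))} {x y f : EuclideanSpace ℝ (Fin m)}

lemma inner_pos_of_mem_dualCone_of_mem_interior (hf : f ∈ dualCone C) (hf0 : f ≠ 0)
    (hy : y ∈ interior C) : 0 < ⟪f, y⟫ := by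
  obtain ⟨t, ht, hmem⟩ := exists_pos_sub_smul_mem_of_mem_interior hy f
  have h := hf _ hmem
  rw [inner_sub_right, real_inner_smul_right, real_inner_self_eq_norm_sq] at h
  nlinarith [mul_pos ht (pow_pos (norm_pos_iff.2 hf0) 2)]

lemma supportRatios_nonneg (hx : x ∈ C) (hy : y ∈ interior C) :
    ∀ r ∈ supportRatios C x y, 0 ≤ r := by
  rintro r ⟨f, hf, hf0, rfl⟩
  exact div_nonneg (hf x hx) (inner_pos_of_mem_dualCone_of_mem_interior hf hf0 hy).le

lemma smul_sub_mem_iff_mem_upperBounds {P : ProperCone ℝ (EuclideanSpace ℝ (Fin m))}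
    (hy : y ∈ interior (P : Set _)) (l : ℝ) :
    l • y - x ∈ (P : Set _) ↔ l ∈ upperBounds (supportRatios P x y) := by
  rw [SetLike.mem_coe, mem_iff_forall_mem_dualCone]
  constructor
  · rintro h r ⟨f, hf, hf0, rfl⟩
    exact (inner_smul_sub_nonneg_iff (inner_pos_of_mem_dualCone_of_mem_interior hf hf0 hy) l).1
      (h f hf)
  · intro h f hf
    rcases eq_or_ne f 0 with rfl | hf0
    · simp
    · exact (inner_smul_sub_nonneg_iff (inner_pos_of_mem_dualCone_of_mem_interior hf hf0 hy) l).2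
        (h ⟨f, hf, hf0, rfl⟩)

lemma setOf_smul_sub_mem_eq_upperBounds {P : ProperCone ℝ (EuclideanSpace ℝ (Fin m))}
    (hx : x ∈ P) (hy : y ∈ interior (P : Set _)) (hT : (supportRatios P x y).Nonempty) :
    {l : ℝ | 0 ≤ l ∧ l • y - x ∈ (P : Set _)} = upperBounds (supportRatios P x y) := by
  ext l
  rw [mem_ofPred_eq, smul_sub_mem_iff_mem_upperBounds hy]
  obtain ⟨r, hr⟩ := hT
  exact ⟨And.right, fun h => ⟨(supportRatios_nonneg hx hy r hr).trans (h hr), h⟩⟩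

end DualCone

/-- Dual characterization of the Birkhoff coefficient `M(x,y)` via supporting
hyperplanes: for a closed convex cone `C ≠ ℝ^m`, `x ∈ C` and `y` in the interior of
`C`, every nonzero `f ∈ C*` has `⟨f,y⟩ > 0`, and
`inf{λ ≥ 0 : λ•y − x ∈ C} = sup{⟨f,x⟩/⟨f,y⟩ : f ∈ C*, f ≠ 0}`, both sides being
finite and nonnegative. -/
theorem stmt7 {m : ℕ} (C : Set (EuclideanSpace ℝ (Fin m)))
    (hadd : ∀ a ∈ C, ∀ b ∈ C, a + b ∈ C)
    (hsmul : ∀ c : ℝ, 0 < c → ∀ a ∈ C, c • a ∈ C)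
    (hclosed : IsClosed C) (hne : C ≠ Set.univ)
    (x : EuclideanSpace ℝ (Fin m)) (hx : x ∈ C)
    (y : EuclideanSpace ℝ (Fin m)) (hy : y ∈ interior C) :
    (∀ f ∈ dualCone C, f ≠ 0 → 0 < ⟪f, y⟫) ∧
    ({l : ℝ | 0 ≤ l ∧ l • y - x ∈ C}).Nonempty ∧
    ({r : ℝ | ∃ f ∈ dualCone C, f ≠ 0 ∧ r = ⟪f, x⟫ / ⟪f, y⟫}).Nonempty ∧
    BddAbove {r : ℝ | ∃ f ∈ dualCone C, f ≠ 0 ∧ r = ⟪f, x⟫ / ⟪f, y⟫} ∧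
    Mcoef C x y = sSup {r : ℝ | ∃ f ∈ dualCone C, f ≠ 0 ∧ r = ⟪f, x⟫ / ⟪f, y⟫} ∧
    0 ≤ Mcoef C x y := by
  obtain ⟨P, rfl⟩ := exists_properCone_coe_eq hadd hsmul hclosed ⟨y, interior_subset hy⟩
  have hT : (supportRatios P x y).Nonempty := by
    obtain ⟨f, hf, hf0⟩ := exists_mem_dualCone_ne_zero P hne
    exact ⟨_, f, hf, hf0, rfl⟩
  have hS := setOf_smul_sub_mem_eq_upperBounds hx hy hT
  obtain ⟨l, hl⟩ := exists_smul_sub_mem_of_mem_interior hsmul hy x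
  have hbdd : BddAbove (supportRatios P x y) := ⟨l, hS ▸ hl⟩
  have hM : Mcoef (P : Set _) x y = sSup (supportRatios P x y) := by
    rw [Mcoef, hS, csInf_upperBounds_eq_csSup hbdd hT]
  exact ⟨fun f hf hf0 => inner_pos_of_mem_dualCone_of_mem_interior hf hf0 hy, ⟨l, hl⟩, hT, hbdd,
    hM, hM ▸ Real.sSup_nonneg (supportRatios_nonneg hx hy)⟩
end

section
/- Let E be a real inner product space, let x, b ∈ E with x ≠ b, let 0 < u < 1, and set y := x + u•(b − x). Let n ∈ E and c ∈ ℝ satisfy ⟨x, n⟩ < c and ⟨b, n⟩ ≤ c. Then c − ⟨y, n⟩ > 0 and (c − ⟨x, n⟩)/(c − ⟨y, n⟩) ≤ 1/(1 − u) = ‖x − b‖/‖y − b‖. (Among all half-spaces {z : ⟨z,n⟩ ≤ c} containing the point b, the ratio of the distances of x and y to the bounding hyperplane is at most the ratio attained at a supporting hyperplane through the exit point b; this is the key inequality in Yamada's variational characterization of the Hilbert metric.) -/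
open scoped RealInnerProductSpace

/-- Key inequality in Yamada's variational characterization of the Hilbert metric:
among all half-spaces `{z : ⟨z,n⟩ ≤ c}` containing the exit point `b`, the ratio of
the (affine) distances of `x` and of `y = x + u•(b − x)` (`0 < u < 1`) to the bounding
hyperplane is at most `1/(1 − u) = ‖x − b‖/‖y − b‖`. -/
theorem stmt9 {E : Type*} [NormedAddCommGroup E] [InnerProductSpace ℝ E]
    (x b : E) (hxb : x ≠ b) (u : ℝ) (hu0 : 0 < u) (hu1 : u < 1)
    (y : E) (hy : y = x + u • (b - x))
    (n : E) (c : ℝ) (hx : ⟪x, n⟫ < c) (hb : ⟪b, n⟫ ≤ c) :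
    0 < c - ⟪y, n⟫ ∧
    (c - ⟪x, n⟫) / (c - ⟪y, n⟫) ≤ 1 / (1 - u) ∧
    1 / (1 - u) = ‖x - b‖ / ‖y - b‖ := by
  have h1u : (0:ℝ) < 1 - u := by linarith
  have hyn : ⟪y, n⟫ = (1 - u) * ⟪x, n⟫ + u * ⟪b, n⟫ := by
    simp [hy, inner_add_left, inner_sub_left, real_inner_smul_left]
    ring
  have hcy : c - ⟪y, n⟫ = (1 - u) * (c - ⟪x, n⟫) + u * (c - ⟪b, n⟫) := by
    rw [hyn]; ring
  have hpos : 0 < c - ⟪y, n⟫ := by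
    rw [hcy]
    have : 0 < (1 - u) * (c - ⟪x, n⟫) := by nlinarith
    nlinarith
  refine ⟨hpos, ?_, ?_⟩
  · rw [div_le_div_iff₀ hpos h1u]
    rw [hcy]
    nlinarith
  · have hyb : y - b = (1 - u) • (x - b) := by
      rw [hy]; module
    rw [hyb, norm_smul]
    have hnb : ‖x - b‖ ≠ 0 := by
      simp [sub_eq_zero, hxb]
    rw [Real.norm_eq_abs, abs_of_pos h1u]
    field_simp
end
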